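/- There exist absolute constants C₀ ≥ 1 and c₀ ∈ (0,1] such that the following holds for every C ≥ C₀ and every ε ∈ (0, c₀/C]. Let N ≥ 1 and let x̂, ŵ, ẑ ∈ ℝ^N with v̂ = x̂ + ŵ. Let Z = supp(ẑ) and suppose: (a) Z ⊆ supp(x̂); (b) 2‖ŵ‖₂ ≤ ε·|x̂[i]| for every i ∈ supp(x̂); (c) for every i ∈ Z, |ẑ[i] − v̂[i]| ≤ Cε·|v̂[i]| and |v̂[i]| ≥ (1 − 2Cε)·max_j |v̂[j] − ẑ[j]|. Let X ⊆ {0,…,N−1} be any set with |X| = |Z| such that |x̂[j]| ≤ |x̂[i]| for all i ∈ X and j ∉ X (a set of positions of the |Z| largest coordinates of x̂ in absolute value). Then ‖x̂ − ẑ‖₂² ≤ 4ε²(C+1)²·Σ_{i∈X} x̂[i]² + (1 + 5Cε)·Σ_{i∉X} x̂[i]². -/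

import Mathlib

/-!
On the support `Z` of `ẑ` the first invariant gives `|x̂ᵢ - ẑᵢ| ≤ 2ε(C+1)|x̂ᵢ|`, while off `Z`
the error is `x̂ᵢ` itself. Since `|X| = |Z|`, the coordinates of `X \ Z` (charged `x̂ⱼ²` but only
allowed `4ε²(C+1)² x̂ⱼ²`) can be paid for by those of `Z \ X` (charged `4ε²(C+1)² x̂ᵢ²` but allowed
`(1 + 5Cε) x̂ᵢ²`): the second invariant at `j ∉ Z`, where `ẑⱼ = 0`, says that `|v̂ⱼ|` is at most
`|v̂ᵢ| / (1 - 2Cε)`, and the noise changes `|x̂|` by a factor `1 ± ε/2` only.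
-/

open Finset

lemma Finset.sum_le_sum_of_card_eq_of_forall_le {α : Type*} {s t : Finset α} {f g : α → ℝ}
    (hcard : #s = #t) (hfg : ∀ j ∈ s, ∀ i ∈ t, f j ≤ g i) :
    ∑ j ∈ s, f j ≤ ∑ i ∈ t, g i := by
  rcases t.eq_empty_or_nonempty with rfl | ht
  · simp [card_eq_zero.mp hcard]
  calc ∑ j ∈ s, f j ≤ #s • t.inf' ht g :=
        sum_le_card_nsmul s f _ fun j hj => le_inf' ht _ (hfg j hj)
    _ = #t • t.inf' ht g := by rw [hcard]
    _ ≤ ∑ i ∈ t, g i := card_nsmul_le_sum t g _ fun i hi => inf'_le g hi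

lemma sum_le_of_exchange {ι : Type*} [Fintype ι] [DecidableEq ι] {Z X : Finset ι}
    {f g : ι → ℝ} {μ η : ℝ} (hμ : 0 ≤ μ) (hη : 0 ≤ η) (hg : ∀ i, 0 ≤ g i)
    (hcard : #X = #Z) (hZ : ∀ i ∈ Z, f i ≤ μ * g i) (hZc : ∀ i ∉ Z, f i ≤ g i)
    (hexch : ∀ j ∈ X \ Z, ∀ i ∈ Z \ X, g j ≤ (1 + η - μ) * g i) :
    ∑ i, f i ≤ μ * ∑ i ∈ X, g i + (1 + η) * ∑ i ∈ Xᶜ, g i := by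
  have hf : ∑ i, f i ≤ μ * ∑ i ∈ Z, g i + ∑ i ∈ Zᶜ, g i := by
    rw [← sum_add_sum_compl Z f, mul_sum]
    exact add_le_add (sum_le_sum hZ) (sum_le_sum fun i hi => hZc i (mem_compl.mp hi))
  have hXZ : ∑ j ∈ X \ Z, g j ≤ (1 + η - μ) * ∑ i ∈ Z \ X, g i := by
    rw [mul_sum]
    exact sum_le_sum_of_card_eq_of_forall_le (card_sdiff_comm hcard) hexch
  have hZ_split : ∑ i ∈ Z, g i = ∑ i ∈ X ∩ Z, g i + ∑ i ∈ Z \ X, g i := by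
    rw [inter_comm, sum_inter_add_sum_sdiff]
  have hX_split : ∑ i ∈ X, g i = ∑ i ∈ X ∩ Z, g i + ∑ i ∈ X \ Z, g i :=
    (sum_inter_add_sum_sdiff X Z g).symm
  have hZc_split : ∑ i ∈ Zᶜ, g i = ∑ i ∈ X \ Z, g i + ∑ i ∈ Xᶜ \ Z, g i := by
    rw [← sum_inter_add_sum_sdiff Zᶜ X]
    congr 2 <;> ext <;> simp [and_comm]
  have hXc_split : ∑ i ∈ Xᶜ, g i = ∑ i ∈ Z \ X, g i + ∑ i ∈ Xᶜ \ Z, g i := by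
    rw [← sum_inter_add_sum_sdiff Xᶜ Z]
    congr 2; ext; simp [and_comm]
  have h1 : 0 ≤ μ * ∑ i ∈ X \ Z, g i := mul_nonneg hμ (sum_nonneg fun i _ => hg i)
  have h2 : 0 ≤ η * ∑ i ∈ Xᶜ \ Z, g i := mul_nonneg hη (sum_nonneg fun i _ => hg i)
  rw [hZ_split, hZc_split] at hf
  rw [hX_split, hXc_split]
  linarith

lemma abs_le_sqrt_sum_sq {ι : Type*} [Fintype ι] (w : ι → ℝ) (i : ι) :
    |w i| ≤ √(∑ j, w j ^ 2) :=
  Real.abs_le_sqrt (single_le_sum (fun j _ => sq_nonneg (w j)) (mem_univ i))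

lemma one_sub_mul_abs_le_abs_add {δ x w : ℝ} (hw : |w| ≤ δ * |x|) :
    (1 - δ) * |x| ≤ |x + w| := by
  have := abs_sub_abs_le_abs_sub x (-w)
  rw [sub_neg_eq_add, abs_neg] at this
  linarith

lemma abs_add_le_one_add_mul_abs {δ x w : ℝ} (hw : |w| ≤ δ * |x|) :
    |x + w| ≤ (1 + δ) * |x| := by
  linarith [abs_add_le x w]

lemma sq_sub_le_of_abs_sub_add_le {t ε x w z : ℝ} (ht : 0 ≤ t) (ht1 : t ≤ 1)
    (hz : |z - (x + w)| ≤ t * |x + w|) (hw : |w| ≤ ε / 2 * |x|) :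
    (x - z) ^ 2 ≤ 4 * (t + ε) ^ 2 * x ^ 2 := by
  have hxz : |x - z| ≤ 2 * (t + ε) * |x| := by
    have h1 := abs_sub_le x (x + w) z
    rw [sub_add_cancel_left, abs_neg, abs_sub_comm (x + w)] at h1
    have h2 : t * |x + w| ≤ t * (|x| + |w|) := mul_le_mul_of_nonneg_left (abs_add_le x w) ht
    nlinarith [abs_nonneg x, abs_nonneg w]
  calc (x - z) ^ 2 = |x - z| ^ 2 := (sq_abs _).symm
    _ ≤ (2 * (t + ε) * |x|) ^ 2 := pow_le_pow_left₀ (abs_nonneg _) hxz 2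
    _ = 4 * (t + ε) ^ 2 * x ^ 2 := by rw [mul_pow, mul_pow, sq_abs]; ring

lemma sq_le_of_peeling_order {t ε xj wj xi wi : ℝ} (hε : 0 < ε) (hεt : 100 * ε ≤ t)
    (ht : t ≤ 1 / 42) (hj : (1 - ε / 2) * |xj| ≤ |xj + wj|) (hi : |wi| ≤ ε / 2 * |xi|)
    (h : (1 - 2 * t) * |xj + wj| ≤ |xi + wi|) :
    xj ^ 2 ≤ (1 + 5 * t - 4 * (t + ε) ^ 2) * xi ^ 2 := by
  have hji : (1 - 2 * t) * ((1 - ε / 2) * |xj|) ≤ (1 + ε / 2) * |xi| :=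
    calc (1 - 2 * t) * ((1 - ε / 2) * |xj|) ≤ (1 - 2 * t) * |xj + wj| :=
          mul_le_mul_of_nonneg_left hj (by linarith)
      _ ≤ |xi + wi| := h
      _ ≤ (1 + ε / 2) * |xi| := abs_add_le_one_add_mul_abs hi
  -- `ε ≤ t / 100` absorbs the noise factors into `t`, and `4 (t + ε)² ≤ t / 10` since `t ≤ 1/42`.
  have hlin : (1 - 2.005 * t) * |xj| ≤ (1 + t / 200) * |xi| := by
    nlinarith [mul_nonneg hε.le (abs_nonneg xj), abs_nonneg xj, abs_nonneg xi]
  have hsq : ((1 - 2.005 * t) * |xj|) ^ 2 ≤ ((1 + t / 200) * |xi|) ^ 2 :=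
    pow_le_pow_left₀ (by nlinarith [abs_nonneg xj]) hlin 2
  have hμ : 4 * (t + ε) ^ 2 ≤ t / 10 := by nlinarith
  have hpoly : (1 + t / 200) ^ 2 ≤ (1 + 4.9 * t) * (1 - 2.005 * t) ^ 2 := by
    nlinarith [mul_nonneg hε.le (by linarith : (0:ℝ) ≤ 1 / 42 - t),
      mul_nonneg (mul_nonneg hε.le hε.le) hε.le]
  have hpos : 0 < (1 - 2.005 * t) ^ 2 := by nlinarith
  have hcoarse : xj ^ 2 ≤ (1 + 4.9 * t) * xi ^ 2 := by
    refine le_of_mul_le_mul_left ?_ hpos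
    rw [mul_pow, mul_pow, sq_abs, sq_abs] at hsq
    nlinarith [mul_le_mul_of_nonneg_right hpoly (sq_nonneg xi)]
  nlinarith [sq_nonneg xi]

open Classical in
theorem stmt_5 :
    ∃ C0 c0 : ℝ, 1 ≤ C0 ∧ 0 < c0 ∧ c0 ≤ 1 ∧
      ∀ C : ℝ, C0 ≤ C → ∀ ε : ℝ, 0 < ε → ε ≤ c0 / C →
      ∀ N : ℕ, 1 ≤ N → ∀ xhat what zhat : Fin N → ℝ,
      (∀ i, zhat i ≠ 0 → xhat i ≠ 0) →
      (∀ i, xhat i ≠ 0 → 2 * Real.sqrt (∑ j, what j ^ 2) ≤ ε * |xhat i|) →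
      (∀ i, zhat i ≠ 0 →
        |zhat i - (xhat i + what i)| ≤ C * ε * |xhat i + what i| ∧
        ∀ j, (1 - 2 * C * ε) * |(xhat j + what j) - zhat j| ≤ |xhat i + what i|) →
      ∀ X : Finset (Fin N),
        X.card = (Finset.univ.filter (fun i => zhat i ≠ 0)).card →
        (∀ i ∈ X, ∀ j, j ∉ X → |xhat j| ≤ |xhat i|) →
      ∑ i, (xhat i - zhat i) ^ 2 ≤
        4 * ε ^ 2 * (C + 1) ^ 2 * ∑ i ∈ X, xhat i ^ 2 +
          (1 + 5 * C * ε) * ∑ i ∈ Xᶜ, xhat i ^ 2 := by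
  refine ⟨100, 1 / 42, by norm_num, by norm_num, by norm_num, ?_⟩
  intro C hC ε hε hεc N _ x w z hsupp hnoise hpeel X hXcard _
  have ht : C * ε ≤ 1 / 42 := by rwa [le_div_iff₀ (by linarith), mul_comm] at hεc
  have hεt : 100 * ε ≤ C * ε := mul_le_mul_of_nonneg_right hC hε.le
  have hw : ∀ i, x i ≠ 0 → |w i| ≤ ε / 2 * |x i| := fun i hi => by
    linarith [abs_le_sqrt_sum_sq w i, hnoise i hi]
  have hv : ∀ j, (1 - ε / 2) * |x j| ≤ |x j + w j| := fun j => by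
    by_cases hxj : x j = 0
    · simp [hxj]
    · exact one_sub_mul_abs_le_abs_add (hw j hxj)
  rw [show 4 * ε ^ 2 * (C + 1) ^ 2 = 4 * (C * ε + ε) ^ 2 by ring, mul_assoc 5]
  refine sum_le_of_exchange (by positivity) (by linarith) (fun i => sq_nonneg _) hXcard
    (fun i hi => ?_) (fun i hi => ?_) (fun j hj i hi => ?_)
  · have hzi : z i ≠ 0 := (mem_filter.mp hi).2
    exact sq_sub_le_of_abs_sub_add_le (by linarith) (by linarith) (hpeel i hzi).1
      (hw i (hsupp i hzi))
  · have hzi : z i = 0 := by simpa using hi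
    rw [hzi, sub_zero]
  · have hzj : z j = 0 := by simpa using (mem_sdiff.mp hj).2
    have hzi : z i ≠ 0 := (mem_filter.mp (mem_sdiff.mp hi).1).2
    have hji := (hpeel i hzi).2 j
    rw [hzj, sub_zero, mul_assoc 2] at hji
    exact sq_le_of_peeling_order hε hεt ht (hv j) (hw i (hsupp i hzi)) hji
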